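/- Standard basis: Let I be an ideal of k[[y]] with vertices α¹,…,α^s of N(I). Then there exists a unique set of generators G₁,…,G_s of I such that supp(G_i − y^{α^i}) ⊆ ℕ^n \ N(I) for each i, i.e. G_i = y^{α^i} + a series supported in ℕ^n \ N(I). -/

import Mathlib

open MvPowerSeries

/-- Total-degree-then-lexicographic comparison on multi-indices. -/
def degLexLt {n : ℕ} (a b : Fin n →₀ ℕ) : Prop :=
  toLex ((∑ i, a i : ℕ), toLex a) < toLex ((∑ i, b i : ℕ), toLex b)

/-- `d` is the initial exponent `exp F` of the power series `F`: the minimum of the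
support of `F` in the total-degree-then-lexicographic order. -/
def IsExpOf {K : Type*} [Field K] {n : ℕ}
    (F : MvPowerSeries (Fin n) K) (d : Fin n →₀ ℕ) : Prop :=
  coeff (R := K) d F ≠ 0 ∧ ∀ e : Fin n →₀ ℕ, coeff (R := K) e F ≠ 0 → ¬ degLexLt e d

/-- The diagram of initial exponents `N(I) = { exp F : F ∈ I \ {0} }`. -/
def diagramOf {K : Type*} [Field K] {n : ℕ}
    (I : Ideal (MvPowerSeries (Fin n) K)) : Set (Fin n →₀ ℕ) :=
  {d | ∃ F ∈ I, F ≠ 0 ∧ IsExpOf F d}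

/-- The translated cone `a + ℕ^n`. -/
def cone {n : ℕ} (a : Fin n →₀ ℕ) : Set (Fin n →₀ ℕ) :=
  {x | ∃ c : Fin n →₀ ℕ, x = a + c}

namespace Std13
variable {n : ℕ}

lemma degLexLt_wf : WellFounded (degLexLt (n := n)) := by
  have h : degLexLt (n := n) = InvImage (· < ·)
      (fun d : Fin n →₀ ℕ => (toLex ((∑ i, d i : ℕ), toLex d) : ℕ ×ₗ Lex (Fin n →₀ ℕ))) := rfl
  rw [h]
  exact InvImage.wf _ wellFounded_lt

lemma degLexLt_irrefl (a : Fin n →₀ ℕ) : ¬ degLexLt a a := lt_irrefl _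

lemma degLexLt_trichotomy {a b : Fin n →₀ ℕ} (hne : a ≠ b) (h : ¬ degLexLt a b) :
    degLexLt b a := by
  unfold degLexLt at *
  rcases lt_trichotomy (toLex ((∑ i, a i : ℕ), toLex a) : ℕ ×ₗ Lex (Fin n →₀ ℕ))
    (toLex ((∑ i, b i : ℕ), toLex b)) with h1 | h1 | h1
  · exact absurd h1 h
  · exact absurd (toLex.injective (congrArg (fun p => (ofLex p).2) h1)) hne
  · exact h1

lemma degLexLt_add_right {a b : Fin n →₀ ℕ} (c : Fin n →₀ ℕ) (h : degLexLt a b) :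
    degLexLt (a + c) (b + c) := by
  unfold degLexLt at *
  rw [Prod.Lex.lt_iff] at *
  have hsum : ∀ x y : Fin n →₀ ℕ, (∑ i, (x + y) i : ℕ) = (∑ i, x i) + ∑ i, y i := by
    intro x y
    simp [Finsupp.add_apply, Finset.sum_add_distrib]
  rcases h with h | ⟨h1, h2⟩
  · left
    simp only [hsum, ofLex_toLex] at h ⊢
    omega
  · right
    constructor
    · simp only [ofLex_toLex] at h1
      simp only [hsum, ofLex_toLex]
      omega
    · simp only [ofLex_toLex] at h2 ⊢
      exact add_lt_add_of_lt_of_le (α := Lex (Fin n →₀ ℕ)) h2 (le_refl (toLex c))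


variable {K : Type*} [Field K]

lemma exists_isExpOf (F : MvPowerSeries (Fin n) K) (hF : F ≠ 0) : ∃ d, IsExpOf F d := by
  have hS : {d : Fin n →₀ ℕ | coeff (R := K) d F ≠ 0}.Nonempty := by
    by_contra h
    apply hF
    ext d
    have := Set.not_nonempty_iff_eq_empty.mp h
    have hd : d ∉ {d : Fin n →₀ ℕ | coeff (R := K) d F ≠ 0} := by rw [this]; exact Set.notMem_empty d
    simpa using hd
  refine ⟨degLexLt_wf.min _ hS, degLexLt_wf.min_mem _ hS, ?_⟩
  intro e he
  exact degLexLt_wf.not_lt_min _ he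

open scoped Classical in
noncomputable def qfun {s : ℕ} (α : Fin s → (Fin n →₀ ℕ)) (F : Fin s → MvPowerSeries (Fin n) K)
    (F₀ : MvPowerSeries (Fin n) K) (d : Fin n →₀ ℕ) (i : Fin s) : K :=
  if α i ≤ d ∧ ∀ j, j < i → ¬ α j ≤ d then
    coeff (R := K) d F₀ - ∑ j : Fin s,
      ∑ p ∈ ((Finset.HasAntidiagonal.antidiagonal d).filter fun p => degLexLt (α j + p.1) d).attach,
        qfun α F F₀ (α j + (p : (Fin n →₀ ℕ) × (Fin n →₀ ℕ)).1) j
          * coeff (R := K) (p : (Fin n →₀ ℕ) × (Fin n →₀ ℕ)).2 (F j)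
  else 0
termination_by (toLex ((∑ k, d k : ℕ), toLex d) : ℕ ×ₗ Lex (Fin n →₀ ℕ))
decreasing_by exact (Finset.mem_filter.mp p.2).2

open scoped Classical in
lemma qfun_eq {s : ℕ} (α : Fin s → (Fin n →₀ ℕ)) (F : Fin s → MvPowerSeries (Fin n) K)
    (F₀ : MvPowerSeries (Fin n) K) (d : Fin n →₀ ℕ) (i : Fin s) :
    qfun α F F₀ d i =
      if α i ≤ d ∧ ∀ j, j < i → ¬ α j ≤ d then
        coeff (R := K) d F₀ - ∑ j : Fin s,
          ∑ p ∈ (Finset.HasAntidiagonal.antidiagonal d).filter fun p => degLexLt (α j + p.1) d,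
            qfun α F F₀ (α j + p.1) j * coeff (R := K) p.2 (F j)
      else 0 := by
  rw [qfun]
  split
  · congr 1
    refine Finset.sum_congr rfl fun j _ => ?_
    exact Finset.sum_attach ((Finset.HasAntidiagonal.antidiagonal d).filter fun p => degLexLt (α j + p.1) d)
      (fun p => qfun α F F₀ (α j + p.1) j * coeff (R := K) p.2 (F j))
  · rfl

noncomputable def Qser {s : ℕ} (α : Fin s → (Fin n →₀ ℕ)) (F : Fin s → MvPowerSeries (Fin n) K)
    (F₀ : MvPowerSeries (Fin n) K) (j : Fin s) : MvPowerSeries (Fin n) K :=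
  fun c => qfun α F F₀ (α j + c) j

lemma coeff_Qser {s : ℕ} (α : Fin s → (Fin n →₀ ℕ)) (F : Fin s → MvPowerSeries (Fin n) K)
    (F₀ : MvPowerSeries (Fin n) K) (j : Fin s) (c : Fin n →₀ ℕ) :
    coeff (R := K) c (Qser α F F₀ j) = qfun α F F₀ (α j + c) j := rfl

lemma div_coeff {s : ℕ} (α : Fin s → (Fin n →₀ ℕ)) (F : Fin s → MvPowerSeries (Fin n) K)
    (hmono : ∀ j, coeff (R := K) (α j) (F j) = 1)
    (htail : ∀ j e, coeff (R := K) e (F j) ≠ 0 → e = α j ∨ degLexLt (α j) e)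
    (F₀ : MvPowerSeries (Fin n) K) (d : Fin n →₀ ℕ) (hd : ∃ i, α i ≤ d) :
    coeff (R := K) d (∑ j, Qser α F F₀ j * F j) = coeff (R := K) d F₀ := by
  classical
  have wfs : WellFounded ((· < ·) : Fin s → Fin s → Prop) := wellFounded_lt
  have hS : {i : Fin s | α i ≤ d}.Nonempty := hd
  set i0 : Fin s := wfs.min {i : Fin s | α i ≤ d} hS with hi0def
  have hi0le : α i0 ≤ d := wfs.min_mem {i : Fin s | α i ≤ d} hS
  have hi0min : ∀ j, α j ≤ d → ¬ j < i0 := fun j hj => wfs.not_lt_min _ hj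
  have hΔ : α i0 ≤ d ∧ ∀ j, j < i0 → ¬ α j ≤ d :=
    ⟨hi0le, fun j hj hle => hi0min j hle hj⟩
  rw [map_sum]
  have step1 : ∀ j, coeff (R := K) d (Qser α F F₀ j * F j)
      = ∑ p ∈ Finset.HasAntidiagonal.antidiagonal d, qfun α F F₀ (α j + p.1) j * coeff (R := K) p.2 (F j) := by
    intro j
    rw [coeff_mul]
    rfl
  simp only [step1]
  have split1 : ∀ j : Fin s,
      (∑ p ∈ Finset.HasAntidiagonal.antidiagonal d, qfun α F F₀ (α j + p.1) j * coeff (R := K) p.2 (F j))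
      = (∑ p ∈ (Finset.HasAntidiagonal.antidiagonal d).filter (fun p => degLexLt (α j + p.1) d),
          qfun α F F₀ (α j + p.1) j * coeff (R := K) p.2 (F j))
        + (∑ p ∈ (Finset.HasAntidiagonal.antidiagonal d).filter (fun p => ¬ degLexLt (α j + p.1) d),
          qfun α F F₀ (α j + p.1) j * coeff (R := K) p.2 (F j)) :=
    fun j => (Finset.sum_filter_add_sum_filter_not _ _ _).symm
  simp only [split1, Finset.sum_add_distrib]
  have hA2 : ∀ j : Fin s,
      (∑ p ∈ (Finset.HasAntidiagonal.antidiagonal d).filter (fun p => ¬ degLexLt (α j + p.1) d),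
          qfun α F F₀ (α j + p.1) j * coeff (R := K) p.2 (F j))
      = if α j ≤ d then qfun α F F₀ d j else 0 := by
    intro j
    have hzero : ∀ p ∈ (Finset.HasAntidiagonal.antidiagonal d).filter (fun p => ¬ degLexLt (α j + p.1) d),
        p ≠ (d - α j, α j) → qfun α F F₀ (α j + p.1) j * coeff (R := K) p.2 (F j) = 0 := by
      intro p hp hne
      rcases Finset.mem_filter.mp hp with ⟨hpa, hplt⟩
      have hpd : p.1 + p.2 = d := Finset.HasAntidiagonal.mem_antidiagonal.mp hpa
      by_contra hz
      have hc2 : coeff (R := K) p.2 (F j) ≠ 0 := fun h => hz (by rw [h, mul_zero])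
      rcases htail j p.2 hc2 with h2 | h2
      · apply hne
        have h1 : p.1 = d - α j := eq_tsub_of_add_eq (by rw [← h2]; exact hpd)
        exact Prod.ext_iff.mpr ⟨h1, h2⟩
      · apply hplt
        have h3 := degLexLt_add_right p.1 h2
        rwa [add_comm p.2 p.1, hpd] at h3
    by_cases hj : α j ≤ d
    · rw [if_pos hj]
      have hmem : (d - α j, α j) ∈
          (Finset.HasAntidiagonal.antidiagonal d).filter (fun p => ¬ degLexLt (α j + p.1) d) := by
        refine Finset.mem_filter.mpr ⟨Finset.HasAntidiagonal.mem_antidiagonal.mpr (tsub_add_cancel_of_le hj), ?_⟩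
        rw [add_tsub_cancel_of_le hj]
        exact degLexLt_irrefl d
      rw [Finset.sum_eq_single_of_mem (d - α j, α j) hmem hzero]
      rw [add_tsub_cancel_of_le hj, hmono j, mul_one]
    · rw [if_neg hj]
      refine Finset.sum_eq_zero fun p hp => ?_
      refine hzero p hp fun hcon => hj ?_
      have hpd : p.1 + p.2 = d := Finset.HasAntidiagonal.mem_antidiagonal.mp (Finset.mem_filter.mp hp).1
      have h2 : p.2 = α j := congrArg Prod.snd hcon
      exact le_iff_exists_add.mpr ⟨p.1, by rw [← hpd, h2, add_comm]⟩
  simp only [hA2]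
  have hsingle : (∑ j : Fin s, if α j ≤ d then qfun α F F₀ d j else 0) = qfun α F F₀ d i0 := by
    rw [Finset.sum_eq_single_of_mem i0 (Finset.mem_univ i0)]
    · rw [if_pos hi0le]
    · intro j _ hji0
      by_cases hj : α j ≤ d
      · have hnot : ¬ (α j ≤ d ∧ ∀ k, k < j → ¬ α k ≤ d) := by
          rintro ⟨-, h2⟩
          have hij : i0 < j := by
            rcases lt_trichotomy j i0 with h | h | h
            · exact absurd h (hi0min j hj)
            · exact absurd h hji0
            · exact h
          exact h2 i0 hij hi0le
        rw [if_pos hj, qfun_eq, if_neg hnot]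
      · rw [if_neg hj]
  rw [hsingle]
  have hq : qfun α F F₀ d i0
      = coeff (R := K) d F₀ - ∑ j : Fin s,
          ∑ p ∈ (Finset.HasAntidiagonal.antidiagonal d).filter (fun p => degLexLt (α j + p.1) d),
            qfun α F F₀ (α j + p.1) j * coeff (R := K) p.2 (F j) := by
    rw [qfun_eq, if_pos hΔ]
  rw [hq]
  ring

end Std13

/-- **standard basis.** Let `I` be an ideal of `k[[y]]` with vertices
`α¹,…,α^s` of `N(I)`.  Then there exists a unique set of generators `G₁,…,G_s` of `I`
such that `supp (G_i − y^{α^i}) ⊆ ℕ^n \ N(I)` for each `i`. -/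
theorem statement13 {K : Type*} [Field K] {n s : ℕ}
    (I : Ideal (MvPowerSeries (Fin n) K))
    (α : Fin s → (Fin n →₀ ℕ))
    (hαmem : ∀ i, α i ∈ diagramOf I)
    (hαgen : diagramOf I = ⋃ i : Fin s, cone (α i))
    (hαmin : ∀ B : Finset (Fin n →₀ ℕ), ↑B ⊆ diagramOf I →
      diagramOf I = {x | ∃ b ∈ B, ∃ c : Fin n →₀ ℕ, x = b + c} → ∀ i, α i ∈ B) :
    ∃! G : Fin s → MvPowerSeries (Fin n) K,
      (∀ i, G i ∈ I) ∧ Ideal.span (Set.range G) = I ∧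
      ∀ i, ∀ d : Fin n →₀ ℕ,
        MvPowerSeries.coeff (R := K) d (G i - MvPowerSeries.monomial (R := K) (α i) 1) ≠ 0 →
          d ∉ diagramOf I := by
  classical
  have hdiag : ∀ d, d ∈ diagramOf I ↔ ∃ i, α i ≤ d := by
    intro d
    rw [hαgen]
    simp only [Set.mem_iUnion, cone, Set.mem_setOf_eq]
    constructor
    · rintro ⟨i, c, rfl⟩
      exact ⟨i, le_iff_exists_add.mpr ⟨c, rfl⟩⟩
    · rintro ⟨i, hi⟩
      rcases le_iff_exists_add.mp hi with ⟨c, hc⟩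
      exact ⟨i, c, hc⟩
  have hrem0 : ∀ R, R ∈ I → (∀ e, (∃ i, α i ≤ e) → coeff (R := K) e R = 0) → R = 0 := by
    intro R hRI hRe
    by_contra hR0
    obtain ⟨m, hm⟩ := Std13.exists_isExpOf R hR0
    exact hm.1 (hRe m ((hdiag m).mp ⟨R, hRI, hR0, hm⟩))
  -- normalized elements of `I` with initial exponents `α i`
  have hmem' : ∀ i, ∃ F, F ∈ I ∧ F ≠ 0 ∧ IsExpOf F (α i) := fun i => hαmem i
  choose F' hF1 hF2 hF3 using hmem'
  set Fn : Fin s → MvPowerSeries (Fin n) K :=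
    fun i => (C (σ := Fin n) (R := K)) (coeff (R := K) (α i) (F' i))⁻¹ * F' i with hFndef
  have hFn_mem : ∀ i, Fn i ∈ I := fun i => Ideal.mul_mem_left _ _ (hF1 i)
  have hFn_mono : ∀ i, coeff (R := K) (α i) (Fn i) = 1 := by
    intro i
    rw [hFndef]
    simp only [coeff_C_mul]
    exact inv_mul_cancel₀ (hF3 i).1
  have hFn_tail : ∀ i e, coeff (R := K) e (Fn i) ≠ 0 → e = α i ∨ degLexLt (α i) e := by
    intro i e he
    have he' : coeff (R := K) e (F' i) ≠ 0 := by
      intro h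
      apply he
      rw [hFndef]
      simp only [coeff_C_mul, h, mul_zero]
    by_cases heq : e = α i
    · exact Or.inl heq
    · exact Or.inr (Std13.degLexLt_trichotomy heq ((hF3 i).2 e he'))
  -- the standard basis
  set G : Fin s → MvPowerSeries (Fin n) K :=
    fun i => Fn i - ∑ j, Std13.Qser α Fn (Fn i - monomial (R := K) (α i) 1) j * Fn j with hGdef
  have hGmem : ∀ i, G i ∈ I :=
    fun i => sub_mem (hFn_mem i)
      (Ideal.sum_mem I fun j _ => Ideal.mul_mem_left _ _ (hFn_mem j))
  have hGtail0 : ∀ i e, (∃ k, α k ≤ e) → coeff (R := K) e (G i - monomial (R := K) (α i) 1) = 0 := by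
    intro i e he
    have hGi : G i - monomial (R := K) (α i) 1
        = (Fn i - monomial (R := K) (α i) 1)
          - ∑ j, Std13.Qser α Fn (Fn i - monomial (R := K) (α i) 1) j * Fn j := by
      rw [hGdef]
      ring
    rw [hGi, map_sub, Std13.div_coeff α Fn hFn_mono hFn_tail _ e he, sub_self]
  have hGtail : ∀ i, ∀ d : Fin n →₀ ℕ,
      MvPowerSeries.coeff (R := K) d (G i - MvPowerSeries.monomial (R := K) (α i) 1) ≠ 0 →
        d ∉ diagramOf I :=
    fun i d hc hd => hc (hGtail0 i d ((hdiag d).mp hd))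
  have hGmono : ∀ i, coeff (R := K) (α i) (G i) = 1 := by
    intro i
    have h0 := hGtail0 i (α i) ⟨i, le_refl _⟩
    rw [map_sub, sub_eq_zero] at h0
    rw [h0, coeff_monomial_same]
  have hGne : ∀ i, G i ≠ 0 := by
    intro i h
    have := hGmono i
    rw [h, map_zero] at this
    exact zero_ne_one (α := K) this
  have hGtail' : ∀ i e, coeff (R := K) e (G i) ≠ 0 → e = α i ∨ degLexLt (α i) e := by
    intro i e he
    by_cases heq : e = α i
    · exact Or.inl heq
    · right
      have hnc : ∀ e', coeff (R := K) e' (G i) ≠ 0 → e' ≠ α i → ¬ ∃ k, α k ≤ e' := by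
        intro e' h1 h2 hex
        have h3 := hGtail0 i e' hex
        rw [map_sub, coeff_monomial, if_neg h2, sub_zero] at h3
        exact h1 h3
      obtain ⟨m, hm⟩ := Std13.exists_isExpOf (G i) (hGne i)
      have hmex : ∃ k, α k ≤ m := (hdiag m).mp ⟨G i, hGmem i, hGne i, hm⟩
      have hmα : m = α i := by
        by_contra hne'
        exact hnc m hm.1 hne' hmex
      have hnlt := hm.2 e he
      rw [hmα] at hnlt
      exact Std13.degLexLt_trichotomy heq hnlt
  have hspan : Ideal.span (Set.range G) = I := by
    apply le_antisymm
    · rw [Ideal.span_le]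
      rintro _ ⟨i, rfl⟩
      exact hGmem i
    · intro F₀ hF₀
      have hR : F₀ - ∑ j, Std13.Qser α G F₀ j * G j = 0 := by
        apply hrem0 _ (sub_mem hF₀
          (Ideal.sum_mem I fun j _ => Ideal.mul_mem_left _ _ (hGmem j)))
        intro e he
        rw [map_sub, Std13.div_coeff α G hGmono hGtail' F₀ e he, sub_self]
      have hF₀eq : F₀ = ∑ j, Std13.Qser α G F₀ j * G j := by
        rw [← sub_eq_zero]
        exact hR
      rw [hF₀eq]
      exact Ideal.sum_mem _ fun j _ =>
        Ideal.mul_mem_left _ _ (Ideal.subset_span ⟨j, rfl⟩)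
  refine ⟨G, ⟨hGmem, hspan, hGtail⟩, ?_⟩
  rintro G' ⟨hG'mem, -, hG'tail⟩
  funext i
  by_contra hne
  have hDmem : G' i - G i ∈ I := sub_mem (hG'mem i) (hGmem i)
  have hDne : G' i - G i ≠ 0 := sub_ne_zero.mpr hne
  obtain ⟨m, hm⟩ := Std13.exists_isExpOf _ hDne
  have hmd : m ∈ diagramOf I := ⟨_, hDmem, hDne, hm⟩
  have hsplit : coeff (R := K) m (G' i - G i)
      = coeff (R := K) m (G' i - monomial (R := K) (α i) 1) - coeff (R := K) m (G i - monomial (R := K) (α i) 1) := by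
    rw [← map_sub]
    congr 1
    ring
  by_cases h1 : coeff (R := K) m (G' i - monomial (R := K) (α i) 1) = 0
  · have h2 : coeff (R := K) m (G i - monomial (R := K) (α i) 1) ≠ 0 := by
      intro h2
      apply hm.1
      rw [hsplit, h1, h2, sub_zero]
    exact hGtail i m h2 hmd
  · exact hG'tail i m h1 hmd
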